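/- The tensor product K₃ × P₄ (K₃ the triangle, P₄ the path with 4 edges) admits a decomposition into p paths of length 8 and q cycles of length 8 for each (p,q) ∈ {(0,3),(2,1),(3,0)}. -/

import Mathlib

open SimpleGraph Finset

/-- The tensor (categorical) product of two simple graphs. -/
def tensorProd {α β : Type*} (G : SimpleGraph α) (H : SimpleGraph β) :
    SimpleGraph (α × β) where
  Adj x y := G.Adj x.1 y.1 ∧ H.Adj x.2 y.2
  symm := ⟨fun _ _ h => ⟨h.1.symm, h.2.symm⟩⟩
  loopless := ⟨fun x h => G.loopless.irrefl x.1 h.1⟩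

/-- The wreath (lexicographic) product of two simple graphs. -/
def wreathProd {α β : Type*} (G : SimpleGraph α) (H : SimpleGraph β) :
    SimpleGraph (α × β) where
  Adj x y := G.Adj x.1 y.1 ∨ (x.1 = y.1 ∧ H.Adj x.2 y.2)
  symm := ⟨fun _ _ h =>
    h.elim (fun h1 => Or.inl h1.symm) (fun h2 => Or.inr ⟨h2.1.symm, h2.2.symm⟩)⟩
  loopless := ⟨fun x h => h.elim (fun h1 => G.loopless.irrefl x.1 h1) (fun h2 => H.loopless.irrefl x.2 h2.2)⟩

/-- The complete graph on `2*k` vertices minus the perfect matching pairing `2t` with `2t+1`. -/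
def completeMinusF (k : ℕ) : SimpleGraph (Fin (2 * k)) where
  Adj i j := i.val / 2 ≠ j.val / 2
  symm := ⟨fun _ _ h => h.symm⟩
  loopless := ⟨fun _ h => h rfl⟩

/-- An `(8; p, q)`-decomposition of the `l`-fold multigraph `G(l)`: `p` paths of length `8`
and `q` cycles of length `8` in `G` such that every edge of `G` is covered, counted with
multiplicity, exactly `l` times. -/
def IsDecomp8 {α : Type*} [DecidableEq α] (G : SimpleGraph α) (l p q : ℕ) : Prop :=
  ∃ (P : Fin p → Σ u v : α, G.Walk u v) (C : Fin q → Σ u : α, G.Walk u u),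
    (∀ i, (P i).2.2.IsPath ∧ (P i).2.2.length = 8) ∧
    (∀ j, (C j).2.IsCycle ∧ (C j).2.length = 8) ∧
    ∀ e ∈ G.edgeSet,
      ((∑ i, ((P i).2.2.edges.count e)) + ∑ j, ((C j).2.edges.count e)) = l


abbrev G35 := tensorProd (completeGraph (Fin 3)) (pathGraph 5)

instance : DecidableRel (pathGraph 5).Adj :=
  fun u v => decidable_of_iff _ pathGraph_adj.symm

instance : DecidableRel G35.Adj :=
  fun x y => inferInstanceAs (Decidable (x.1 ≠ y.1 ∧ (pathGraph 5).Adj x.2 y.2))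

def w_c3_0 : G35.Walk ((2,4) : Fin 3 × Fin 5) ((2,4) : Fin 3 × Fin 5) :=
  Walk.cons (u := ((2,4) : Fin 3 × Fin 5)) (by decide) (Walk.cons (u := ((0,3) : Fin 3 × Fin 5)) (by decide) (Walk.cons (u := ((1,4) : Fin 3 × Fin 5)) (by decide) (Walk.cons (u := ((2,3) : Fin 3 × Fin 5)) (by decide) (Walk.cons (u := ((0,2) : Fin 3 × Fin 5)) (by decide) (Walk.cons (u := ((1,1) : Fin 3 × Fin 5)) (by decide) (Walk.cons (u := ((2,2) : Fin 3 × Fin 5)) (by decide) (Walk.cons (u := ((1,3) : Fin 3 × Fin 5)) (by decide) (Walk.nil))))))))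

def w_c3_1 : G35.Walk ((0,1) : Fin 3 × Fin 5) ((0,1) : Fin 3 × Fin 5) :=
  Walk.cons (u := ((0,1) : Fin 3 × Fin 5)) (by decide) (Walk.cons (u := ((1,2) : Fin 3 × Fin 5)) (by decide) (Walk.cons (u := ((2,3) : Fin 3 × Fin 5)) (by decide) (Walk.cons (u := ((0,4) : Fin 3 × Fin 5)) (by decide) (Walk.cons (u := ((1,3) : Fin 3 × Fin 5)) (by decide) (Walk.cons (u := ((0,2) : Fin 3 × Fin 5)) (by decide) (Walk.cons (u := ((2,1) : Fin 3 × Fin 5)) (by decide) (Walk.cons (u := ((1,0) : Fin 3 × Fin 5)) (by decide) (Walk.nil))))))))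

def w_c3_2 : G35.Walk ((0,1) : Fin 3 × Fin 5) ((0,1) : Fin 3 × Fin 5) :=
  Walk.cons (u := ((0,1) : Fin 3 × Fin 5)) (by decide) (Walk.cons (u := ((2,0) : Fin 3 × Fin 5)) (by decide) (Walk.cons (u := ((1,1) : Fin 3 × Fin 5)) (by decide) (Walk.cons (u := ((0,0) : Fin 3 × Fin 5)) (by decide) (Walk.cons (u := ((2,1) : Fin 3 × Fin 5)) (by decide) (Walk.cons (u := ((1,2) : Fin 3 × Fin 5)) (by decide) (Walk.cons (u := ((0,3) : Fin 3 × Fin 5)) (by decide) (Walk.cons (u := ((2,2) : Fin 3 × Fin 5)) (by decide) (Walk.nil))))))))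

def w_p2c1_0 : G35.Walk ((2,1) : Fin 3 × Fin 5) ((1,1) : Fin 3 × Fin 5) :=
  Walk.cons (u := ((2,1) : Fin 3 × Fin 5)) (by decide) (Walk.cons (u := ((0,2) : Fin 3 × Fin 5)) (by decide) (Walk.cons (u := ((1,3) : Fin 3 × Fin 5)) (by decide) (Walk.cons (u := ((0,4) : Fin 3 × Fin 5)) (by decide) (Walk.cons (u := ((2,3) : Fin 3 × Fin 5)) (by decide) (Walk.cons (u := ((1,2) : Fin 3 × Fin 5)) (by decide) (Walk.cons (u := ((0,1) : Fin 3 × Fin 5)) (by decide) (Walk.cons (u := ((2,0) : Fin 3 × Fin 5)) (by decide) (Walk.nil))))))))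

def w_p2c1_1 : G35.Walk ((2,1) : Fin 3 × Fin 5) ((1,1) : Fin 3 × Fin 5) :=
  Walk.cons (u := ((2,1) : Fin 3 × Fin 5)) (by decide) (Walk.cons (u := ((1,0) : Fin 3 × Fin 5)) (by decide) (Walk.cons (u := ((0,1) : Fin 3 × Fin 5)) (by decide) (Walk.cons (u := ((2,2) : Fin 3 × Fin 5)) (by decide) (Walk.cons (u := ((0,3) : Fin 3 × Fin 5)) (by decide) (Walk.cons (u := ((1,4) : Fin 3 × Fin 5)) (by decide) (Walk.cons (u := ((2,3) : Fin 3 × Fin 5)) (by decide) (Walk.cons (u := ((0,2) : Fin 3 × Fin 5)) (by decide) (Walk.nil))))))))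

def w_p2c1_2 : G35.Walk ((2,4) : Fin 3 × Fin 5) ((2,4) : Fin 3 × Fin 5) :=
  Walk.cons (u := ((2,4) : Fin 3 × Fin 5)) (by decide) (Walk.cons (u := ((0,3) : Fin 3 × Fin 5)) (by decide) (Walk.cons (u := ((1,2) : Fin 3 × Fin 5)) (by decide) (Walk.cons (u := ((2,1) : Fin 3 × Fin 5)) (by decide) (Walk.cons (u := ((0,0) : Fin 3 × Fin 5)) (by decide) (Walk.cons (u := ((1,1) : Fin 3 × Fin 5)) (by decide) (Walk.cons (u := ((2,2) : Fin 3 × Fin 5)) (by decide) (Walk.cons (u := ((1,3) : Fin 3 × Fin 5)) (by decide) (Walk.nil))))))))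

def w_p3_0 : G35.Walk ((0,1) : Fin 3 × Fin 5) ((1,1) : Fin 3 × Fin 5) :=
  Walk.cons (u := ((0,1) : Fin 3 × Fin 5)) (by decide) (Walk.cons (u := ((1,2) : Fin 3 × Fin 5)) (by decide) (Walk.cons (u := ((0,3) : Fin 3 × Fin 5)) (by decide) (Walk.cons (u := ((1,4) : Fin 3 × Fin 5)) (by decide) (Walk.cons (u := ((2,3) : Fin 3 × Fin 5)) (by decide) (Walk.cons (u := ((0,2) : Fin 3 × Fin 5)) (by decide) (Walk.cons (u := ((1,3) : Fin 3 × Fin 5)) (by decide) (Walk.cons (u := ((2,2) : Fin 3 × Fin 5)) (by decide) (Walk.nil))))))))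

def w_p3_1 : G35.Walk ((0,1) : Fin 3 × Fin 5) ((1,3) : Fin 3 × Fin 5) :=
  Walk.cons (u := ((0,1) : Fin 3 × Fin 5)) (by decide) (Walk.cons (u := ((2,0) : Fin 3 × Fin 5)) (by decide) (Walk.cons (u := ((1,1) : Fin 3 × Fin 5)) (by decide) (Walk.cons (u := ((0,0) : Fin 3 × Fin 5)) (by decide) (Walk.cons (u := ((2,1) : Fin 3 × Fin 5)) (by decide) (Walk.cons (u := ((1,2) : Fin 3 × Fin 5)) (by decide) (Walk.cons (u := ((2,3) : Fin 3 × Fin 5)) (by decide) (Walk.cons (u := ((0,4) : Fin 3 × Fin 5)) (by decide) (Walk.nil))))))))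

def w_p3_2 : G35.Walk ((1,1) : Fin 3 × Fin 5) ((1,3) : Fin 3 × Fin 5) :=
  Walk.cons (u := ((1,1) : Fin 3 × Fin 5)) (by decide) (Walk.cons (u := ((0,2) : Fin 3 × Fin 5)) (by decide) (Walk.cons (u := ((2,1) : Fin 3 × Fin 5)) (by decide) (Walk.cons (u := ((1,0) : Fin 3 × Fin 5)) (by decide) (Walk.cons (u := ((0,1) : Fin 3 × Fin 5)) (by decide) (Walk.cons (u := ((2,2) : Fin 3 × Fin 5)) (by decide) (Walk.cons (u := ((0,3) : Fin 3 × Fin 5)) (by decide) (Walk.cons (u := ((2,4) : Fin 3 × Fin 5)) (by decide) (Walk.nil))))))))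

lemma h_c3_0 : (w_c3_0).IsCycle :=
  ⟨⟨by rw [Walk.isTrail_def]; decide, by simp [w_c3_0]⟩, by decide⟩

lemma h_c3_1 : (w_c3_1).IsCycle :=
  ⟨⟨by rw [Walk.isTrail_def]; decide, by simp [w_c3_1]⟩, by decide⟩

lemma h_c3_2 : (w_c3_2).IsCycle :=
  ⟨⟨by rw [Walk.isTrail_def]; decide, by simp [w_c3_2]⟩, by decide⟩

lemma h_p2c1_0 : (w_p2c1_0).IsPath := by rw [Walk.isPath_def]; decide

lemma h_p2c1_1 : (w_p2c1_1).IsPath := by rw [Walk.isPath_def]; decide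

lemma h_p2c1_2 : (w_p2c1_2).IsCycle :=
  ⟨⟨by rw [Walk.isTrail_def]; decide, by simp [w_p2c1_2]⟩, by decide⟩

lemma h_p3_0 : (w_p3_0).IsPath := by rw [Walk.isPath_def]; decide

lemma h_p3_1 : (w_p3_1).IsPath := by rw [Walk.isPath_def]; decide

lemma h_p3_2 : (w_p3_2).IsPath := by rw [Walk.isPath_def]; decide

set_option maxRecDepth 20000

lemma decomp_c3 : IsDecomp8 G35 1 0 3 := by
  refine ⟨Fin.elim0, ![⟨_, w_c3_0⟩, ⟨_, w_c3_1⟩, ⟨_, w_c3_2⟩], fun i => i.elim0, ?_, ?_⟩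
  · intro j
    fin_cases j
    · exact ⟨h_c3_0, rfl⟩
    · exact ⟨h_c3_1, rfl⟩
    · exact ⟨h_c3_2, rfl⟩
  · decide

lemma decomp_p2c1 : IsDecomp8 G35 1 2 1 := by
  refine ⟨![⟨_, _, w_p2c1_0⟩, ⟨_, _, w_p2c1_1⟩], ![⟨_, w_p2c1_2⟩], ?_, ?_, ?_⟩
  · intro i
    fin_cases i
    · exact ⟨h_p2c1_0, rfl⟩
    · exact ⟨h_p2c1_1, rfl⟩
  · intro j
    fin_cases j
    · exact ⟨h_p2c1_2, rfl⟩
  · decide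

lemma decomp_p3 : IsDecomp8 G35 1 3 0 := by
  refine ⟨![⟨_, _, w_p3_0⟩, ⟨_, _, w_p3_1⟩, ⟨_, _, w_p3_2⟩], Fin.elim0, ?_, fun j => j.elim0, ?_⟩
  · intro i
    fin_cases i
    · exact ⟨h_p3_0, rfl⟩
    · exact ⟨h_p3_1, rfl⟩
    · exact ⟨h_p3_2, rfl⟩
  · decide

theorem stmt_5 (p q : ℕ)
    (h : (p, q) = (0, 3) ∨ (p, q) = (2, 1) ∨ (p, q) = (3, 0)) :
    IsDecomp8 (tensorProd (completeGraph (Fin 3)) (pathGraph 5)) 1 p q := by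
  rcases h with h | h | h <;>
    obtain ⟨rfl, rfl⟩ := Prod.mk.injEq .. ▸ h
  · exact decomp_c3
  · exact decomp_p2c1
  · exact decomp_p3
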